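/- Let 𝒮 ⊆ ℝ^{n×n} be such that aff(𝒮) = A₀ + span{A₁,…,A_d}, and suppose there exists Ā₀ ∈ relint(𝒮) ∩ 𝒜_n and that the true matrix A lies in 𝒮 ∩ 𝒜_n. Then Φ(Ã₁,Q) = Φ(Ã₂,Q) for all Ã₁, Ã₂ ∈ 𝒮 ∩ 𝒜_n if and only if there exists P ∈ ℝ^{n×n} with A₀ P + P A₀ᵀ = -Q and A_i P + P A_iᵀ = 0 for all i = 1,…,d. -/

import Mathlib

open Matrix Finset

/-- Frobenius norm of a real matrix. -/
noncomputable def frobNorm {n : ℕ} (M : Matrix (Fin n) (Fin n) ℝ) : ℝ :=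
  Real.sqrt (∑ i, ∑ j, (M i j) ^ 2)

/-- The set `𝒜_n` of matrices whose (complex) eigenvalue pairs never sum to zero. -/
def setAn (n : ℕ) : Set (Matrix (Fin n) (Fin n) ℝ) :=
  {A | ∀ lam ∈ spectrum ℂ (A.map (algebraMap ℝ ℂ)),
      ∀ lam' ∈ spectrum ℂ (A.map (algebraMap ℝ ℂ)), lam + lam' ≠ 0}

/-- Relative interior of a set of matrices (w.r.t. Frobenius-norm balls and the
affine hull). -/
noncomputable def relintM {n : ℕ} (S : Set (Matrix (Fin n) (Fin n) ℝ)) :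
    Set (Matrix (Fin n) (Fin n) ℝ) :=
  {A ∈ S | ∃ ε > (0 : ℝ), ∀ B ∈ (affineSpan ℝ S : Set (Matrix (Fin n) (Fin n) ℝ)),
      frobNorm (B - A) < ε → B ∈ S}


section LyapAux

open Polynomial

variable {m : ℕ}

lemma memSpec (M : Matrix (Fin m) (Fin m) ℂ) (μ : ℂ) :
    μ ∈ spectrum ℂ M ↔ (μ • (1 : Matrix (Fin m) (Fin m) ℂ) - M).det = 0 := by
  rw [spectrum.mem_iff, Algebra.algebraMap_eq_smul_one, Matrix.isUnit_iff_isUnit_det,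
    isUnit_iff_ne_zero, not_ne_iff]

lemma evalCharpoly (M : Matrix (Fin m) (Fin m) ℂ) (t : ℂ) :
    M.charpoly.eval t = (t • (1 : Matrix (Fin m) (Fin m) ℂ) - M).det := by
  rw [Matrix.charpoly, ← Polynomial.coe_evalRingHom, RingHom.map_det]
  congr 1
  ext i j
  by_cases h : i = j <;>
    simp [h, charmatrix_apply_eq, charmatrix_apply_ne, Matrix.map_apply, Matrix.one_apply,
      Matrix.sub_apply, Matrix.smul_apply]

lemma polyShift (B C P : Matrix (Fin m) (Fin m) ℂ) (h : B * P = P * C) (q : ℂ[X]) :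
    (aeval B q) * P = P * (aeval C q) := by
  have hpow : ∀ k : ℕ, B ^ k * P = P * C ^ k := by
    intro k
    induction k with
    | zero => simp
    | succ k ih => rw [pow_succ, pow_succ, mul_assoc, h, ← mul_assoc, ih, mul_assoc]
  induction q using Polynomial.induction_on' with
  | add p q hp hq => simp [map_add, add_mul, mul_add, hp, hq]
  | monomial k a =>
      simp only [aeval_monomial, mul_assoc]
      rw [hpow]
      rw [← mul_assoc, ← mul_assoc]
      congr 1
      rw [Algebra.commutes]

lemma lyap_inj_complex (B : Matrix (Fin m) (Fin m) ℂ)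
    (hspec : ∀ lam ∈ spectrum ℂ B, ∀ lam' ∈ spectrum ℂ B, lam + lam' ≠ 0)
    (P : Matrix (Fin m) (Fin m) ℂ) (hP : B * P + P * Bᵀ = 0) : P = 0 := by
  have hBC : B * P = P * (-Bᵀ) := by
    rw [mul_neg, eq_neg_iff_add_eq_zero]
    exact hP
  have hkey := polyShift B (-Bᵀ) P hBC B.charpoly
  rw [Matrix.aeval_self_charpoly, zero_mul] at hkey
  set M := aeval (-Bᵀ) B.charpoly with hM
  have hdet : IsUnit M.det := by
    rw [isUnit_iff_ne_zero]
    have hfact : B.charpoly = (B.charpoly.roots.map fun r => X - C r).prod :=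
      ((IsAlgClosed.splits B.charpoly).eq_prod_roots_of_monic
        B.charpoly_monic)
    set L := B.charpoly.roots.toList with hL
    have hfact' : B.charpoly = (L.map fun r => X - C r).prod := by
      rw [hfact, ← Multiset.coe_toList B.charpoly.roots, Multiset.map_coe, Multiset.prod_coe]
    have hMprod : M = (L.map fun r => (-Bᵀ) - r • 1).prod := by
      rw [hM, hfact', map_list_prod, List.map_map]
      congr 1
      apply List.map_congr_left
      intro r _
      simp [Algebra.algebraMap_eq_smul_one]
    have hdetprod : M.det = (L.map fun r => ((-Bᵀ) - r • 1).det).prod := by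
      rw [hMprod]
      have := map_list_prod (Matrix.detMonoidHom (n := Fin m) (R := ℂ))
        (L.map fun r => (-Bᵀ) - r • 1)
      simp only [Matrix.coe_detMonoidHom] at this
      rw [this, List.map_map]
      rfl
    rw [hdetprod]
    apply List.prod_ne_zero
    intro h0
    rw [List.mem_map] at h0
    obtain ⟨r, hr, hr0⟩ := h0
    have hrmem : r ∈ B.charpoly.roots := by rw [← Multiset.mem_toList]; exact hr
    have hrB : r ∈ spectrum ℂ B := by
      rw [memSpec]
      have := (Polynomial.isRoot_of_mem_roots hrmem)
      rw [Polynomial.IsRoot, evalCharpoly] at this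
      exact this
    have hrB' : (-r) ∈ spectrum ℂ B := by
      rw [memSpec]
      have h1 : (-Bᵀ) - r • (1 : Matrix (Fin m) (Fin m) ℂ) =
          ((-r) • (1 : Matrix (Fin m) (Fin m) ℂ) - B)ᵀ := by
        rw [Matrix.transpose_sub, Matrix.transpose_smul, Matrix.transpose_one]
        module
      rw [← Matrix.det_transpose, ← h1]
      exact hr0
    exact hspec r hrB (-r) hrB' (add_neg_cancel r)
  have hMu : M * M⁻¹ = 1 := Matrix.mul_nonsing_inv M hdet
  calc P = P * (M * M⁻¹) := by rw [hMu, mul_one]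
    _ = P * M * M⁻¹ := by rw [mul_assoc]
    _ = 0 := by rw [← hkey, zero_mul]

lemma map_lyap_eq (A P : Matrix (Fin m) (Fin m) ℝ) :
    (A * P + P * Aᵀ).map (algebraMap ℝ ℂ) =
      (A.map (algebraMap ℝ ℂ)) * (P.map (algebraMap ℝ ℂ)) +
        (P.map (algebraMap ℝ ℂ)) * (A.map (algebraMap ℝ ℂ))ᵀ := by
  ext i j
  simp [Matrix.map_apply, Matrix.add_apply, Matrix.mul_apply, Matrix.transpose_apply]

lemma lyap_inj_real (A : Matrix (Fin m) (Fin m) ℝ) (hA : A ∈ setAn m)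
    (P : Matrix (Fin m) (Fin m) ℝ) (hP : A * P + P * Aᵀ = 0) : P = 0 := by
  have h := lyap_inj_complex (A.map (algebraMap ℝ ℂ)) hA (P.map (algebraMap ℝ ℂ)) ?_
  · ext i j
    have := congrFun (congrFun h i) j
    simpa [Matrix.map_apply] using this
  · rw [← map_lyap_eq, hP]
    ext i j
    simp [Matrix.map_apply]

noncomputable def lyapL (A : Matrix (Fin m) (Fin m) ℝ) :
    Matrix (Fin m) (Fin m) ℝ →ₗ[ℝ] Matrix (Fin m) (Fin m) ℝ where
  toFun P := A * P + P * Aᵀ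
  map_add' P Q := by noncomm_ring
  map_smul' c P := by
    simp [Matrix.mul_smul, Matrix.smul_mul, smul_add]

lemma lyap_surj (A : Matrix (Fin m) (Fin m) ℝ) (hA : A ∈ setAn m)
    (R : Matrix (Fin m) (Fin m) ℝ) : ∃ P, A * P + P * Aᵀ = R := by
  have hinj : Function.Injective (lyapL A) := by
    rw [injective_iff_map_eq_zero]
    exact fun P hP => lyap_inj_real A hA P hP
  have hsurj := (LinearMap.injective_iff_surjective (f := lyapL A)).mp hinj
  obtain ⟨P, hP⟩ := hsurj R
  exact ⟨P, hP⟩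

lemma lyap_unique (A : Matrix (Fin m) (Fin m) ℝ) (hA : A ∈ setAn m)
    (R P₁ P₂ : Matrix (Fin m) (Fin m) ℝ) (h1 : A * P₁ + P₁ * Aᵀ = R)
    (h2 : A * P₂ + P₂ * Aᵀ = R) : P₁ = P₂ := by
  have h : A * (P₁ - P₂) + (P₁ - P₂) * Aᵀ = 0 := by
    have : (A * P₁ + P₁ * Aᵀ) - (A * P₂ + P₂ * Aᵀ) = 0 := by rw [h1, h2, sub_self]
    rw [Matrix.sub_mul, Matrix.mul_sub, ← this]
    abel
  have := lyap_inj_real A hA _ h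
  exact sub_eq_zero.mp this

lemma exists_eigvec (M : Matrix (Fin m) (Fin m) ℂ) (μ : ℂ) (hμ : μ ∈ spectrum ℂ M) :
    ∃ v : Fin m → ℂ, v ≠ 0 ∧ M.mulVec v = μ • v := by
  rw [memSpec] at hμ
  obtain ⟨v, hv0, hv⟩ := (Matrix.exists_mulVec_eq_zero_iff).mpr hμ
  refine ⟨v, hv0, ?_⟩
  have := hv
  rw [Matrix.sub_mulVec, Matrix.smul_mulVec, Matrix.one_mulVec, sub_eq_zero] at this
  exact this.symm

lemma lyap_noninj (A : Matrix (Fin m) (Fin m) ℝ) (hA : A ∉ setAn m) :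
    ∃ P : Matrix (Fin m) (Fin m) ℝ, P ≠ 0 ∧ A * P + P * Aᵀ = 0 := by
  simp only [setAn, Set.mem_setOf_eq, not_forall] at hA
  obtain ⟨lam, hlam, lam', hlam', hsum⟩ := hA
  rw [not_ne_iff] at hsum
  set B := A.map (algebraMap ℝ ℂ) with hB
  obtain ⟨v, hv0, hv⟩ := exists_eigvec B lam hlam
  obtain ⟨w, hw0, hw⟩ := exists_eigvec B lam' hlam'
  set Pc : Matrix (Fin m) (Fin m) ℂ := Matrix.vecMulVec v w with hPc
  have hPc0 : Pc ≠ 0 := by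
    obtain ⟨i, hi⟩ := Function.ne_iff.mp hv0
    obtain ⟨j, hj⟩ := Function.ne_iff.mp hw0
    intro h
    have := congrFun (congrFun h i) j
    simp only [hPc, Matrix.vecMulVec_apply, Matrix.zero_apply, Pi.zero_apply] at this hi hj
    exact (mul_ne_zero hi hj) this
  have hPceq : B * Pc + Pc * Bᵀ = 0 := by
    ext i j
    have h1 : (B * Pc) i j = (B.mulVec v) i * w j := by
      simp [hPc, Matrix.mul_apply, Matrix.vecMulVec_apply, Matrix.mulVec, dotProduct,
        Finset.sum_mul, mul_assoc]
    have h2 : (Pc * Bᵀ) i j = v i * (B.mulVec w) j := by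
      simp only [hPc, Matrix.mul_apply, Matrix.vecMulVec_apply, Matrix.transpose_apply,
        Matrix.mulVec, dotProduct, Finset.mul_sum]
      congr 1; ext k; ring
    rw [Matrix.add_apply, h1, h2, hv, hw]
    simp only [Pi.smul_apply, smul_eq_mul, Matrix.zero_apply]
    have h3 : (lam + lam') * (v i * w j) = 0 := by rw [hsum, zero_mul]
    linear_combination h3
  have hmapre : ∀ Pc' : Matrix (Fin m) (Fin m) ℂ, B * Pc' + Pc' * Bᵀ = 0 →
      A * (Pc'.map Complex.re) + (Pc'.map Complex.re) * Aᵀ = 0 := by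
    intro Pc' hPc'
    ext i j
    have h0 : ((B * Pc' + Pc' * Bᵀ) i j).re = 0 := by rw [hPc']; simp
    simp only [Matrix.add_apply, Matrix.mul_apply, Matrix.map_apply, Matrix.transpose_apply,
      Matrix.zero_apply, hB, Complex.coe_algebraMap, Complex.add_re, Complex.re_sum, Complex.mul_re,
      Complex.ofReal_re, Complex.ofReal_im, zero_mul, sub_zero, mul_zero] at h0 ⊢
    convert h0 using 2
  have hmapim : ∀ Pc' : Matrix (Fin m) (Fin m) ℂ, B * Pc' + Pc' * Bᵀ = 0 →
      A * (Pc'.map Complex.im) + (Pc'.map Complex.im) * Aᵀ = 0 := by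
    intro Pc' hPc'
    ext i j
    have h0 : ((B * Pc' + Pc' * Bᵀ) i j).im = 0 := by rw [hPc']; simp
    simp only [Matrix.add_apply, Matrix.mul_apply, Matrix.map_apply, Matrix.transpose_apply,
      Matrix.zero_apply, hB, Complex.coe_algebraMap, Complex.add_im, Complex.im_sum, Complex.mul_im,
      Complex.ofReal_re, Complex.ofReal_im, zero_mul, add_zero, mul_zero, zero_add] at h0 ⊢
    convert h0 using 2
  by_cases hre0 : Pc.map Complex.re = 0
  · refine ⟨Pc.map Complex.im, ?_, hmapim Pc hPceq⟩
    intro him0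
    apply hPc0
    ext i j
    have h1 := congrFun (congrFun hre0 i) j
    have h2 := congrFun (congrFun him0 i) j
    simp only [Matrix.map_apply, Matrix.zero_apply] at h1 h2
    exact Complex.ext h1 h2
  · exact ⟨Pc.map Complex.re, hre0, hmapre Pc hPceq⟩

noncomputable def lyapK (A : Matrix (Fin m) (Fin m) ℝ) :
    Matrix (Fin m × Fin m) (Fin m × Fin m) ℝ :=
  fun p q => (if p.2 = q.2 then A p.1 q.1 else 0) + (if p.1 = q.1 then A p.2 q.2 else 0)

lemma lyapK_mulVec (A P : Matrix (Fin m) (Fin m) ℝ) (p : Fin m × Fin m) :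
    (lyapK A).mulVec (fun q => P q.1 q.2) p = (A * P + P * Aᵀ) p.1 p.2 := by
  obtain ⟨i, j⟩ := p
  simp only [lyapK, Matrix.mulVec, dotProduct, Fintype.sum_prod_type, add_mul,
    ite_mul, zero_mul, Finset.sum_add_distrib, Matrix.add_apply, Matrix.mul_apply,
    Matrix.transpose_apply]
  congr 1
  · apply Finset.sum_congr rfl
    intro k _
    rw [Finset.sum_ite_eq]
    simp
  · rw [Finset.sum_comm]
    apply Finset.sum_congr rfl
    intro l _
    rw [Finset.sum_ite_eq]
    simp [mul_comm]

lemma frob_entry_le (M : Matrix (Fin m) (Fin m) ℝ) (i j : Fin m) :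
    |M i j| ≤ frobNorm M := by
  rw [← Real.sqrt_sq_eq_abs]
  apply Real.sqrt_le_sqrt
  calc M i j ^ 2 ≤ ∑ j', (M i j') ^ 2 :=
        Finset.single_le_sum (f := fun j' => (M i j') ^ 2) (fun _ _ => sq_nonneg _)
          (Finset.mem_univ j)
    _ ≤ ∑ i', ∑ j', (M i' j') ^ 2 :=
        Finset.single_le_sum (f := fun i' => ∑ j', (M i' j') ^ 2)
          (fun _ _ => Finset.sum_nonneg fun _ _ => sq_nonneg _) (Finset.mem_univ i)

lemma frobNorm_nonneg (M : Matrix (Fin m) (Fin m) ℝ) : 0 ≤ frobNorm M := Real.sqrt_nonneg _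

lemma frobNorm_smul (t : ℝ) (M : Matrix (Fin m) (Fin m) ℝ) :
    frobNorm (t • M) = |t| * frobNorm M := by
  unfold frobNorm
  rw [← Real.sqrt_sq_eq_abs, ← Real.sqrt_mul (sq_nonneg t)]
  congr 1
  rw [Finset.mul_sum]
  apply Finset.sum_congr rfl
  intro i _
  rw [Finset.mul_sum]
  apply Finset.sum_congr rfl
  intro j _
  simp [Matrix.smul_apply, mul_pow]

lemma frobNorm_pos (M : Matrix (Fin m) (Fin m) ℝ) (hM : M ≠ 0) : 0 < frobNorm M := by
  rcases lt_or_eq_of_le (frobNorm_nonneg M) with h | h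
  · exact h
  · exfalso
    apply hM
    ext i j
    have h1 := frob_entry_le M i j
    rw [← h] at h1
    have := abs_nonneg (M i j)
    have : |M i j| = 0 := le_antisymm h1 (abs_nonneg _)
    simpa using abs_eq_zero.mp this

lemma lyapK_det_ne_zero (A : Matrix (Fin m) (Fin m) ℝ) (hA : A ∈ setAn m) :
    (lyapK A).det ≠ 0 := by
  intro hdet
  obtain ⟨v, hv0, hv⟩ := (Matrix.exists_mulVec_eq_zero_iff).mpr hdet
  set P : Matrix (Fin m) (Fin m) ℝ := fun i j => v (i, j) with hP
  have hveq : (fun q : Fin m × Fin m => P q.1 q.2) = v := by ext q; rfl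
  have hPeq : A * P + P * Aᵀ = 0 := by
    ext i j
    have := lyapK_mulVec A P (i, j)
    rw [hveq, hv] at this
    simpa using this.symm
  have := lyap_inj_real A hA P hPeq
  apply hv0
  ext q
  have := congrFun (congrFun this q.1) q.2
  simpa [hP] using this

lemma lyapK_det_eq_zero (A : Matrix (Fin m) (Fin m) ℝ) (hA : A ∉ setAn m) :
    (lyapK A).det = 0 := by
  obtain ⟨P, hP0, hPeq⟩ := lyap_noninj A hA
  rw [← Matrix.exists_mulVec_eq_zero_iff]
  refine ⟨fun q => P q.1 q.2, ?_, ?_⟩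
  · intro h
    apply hP0
    ext i j
    exact congrFun h (i, j)
  · ext p
    rw [lyapK_mulVec A P p, hPeq]
    rfl

lemma lyapK_det_continuous : Continuous fun A : Matrix (Fin m) (Fin m) ℝ => (lyapK A).det := by
  apply Continuous.matrix_det
  apply continuous_matrix
  intro p q
  apply Continuous.add
  · by_cases h : p.2 = q.2 <;> simp only [lyapK, h, if_true, if_false]
    · exact (continuous_apply q.1).comp (continuous_apply p.1)
    · exact continuous_const
  · by_cases h : p.1 = q.1 <;> simp only [lyapK, h, if_true, if_false]
    · exact (continuous_apply q.2).comp (continuous_apply p.2)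
    · exact continuous_const

attribute [local instance] Matrix.normedAddCommGroup

lemma setAn_nbhd (Ab : Matrix (Fin m) (Fin m) ℝ) (hAb : Ab ∈ setAn m) :
    ∃ δ > (0 : ℝ), ∀ A', frobNorm (A' - Ab) < δ → A' ∈ setAn m := by
  have hc : ContinuousAt (fun A : Matrix (Fin m) (Fin m) ℝ => (lyapK A).det) Ab :=
    lyapK_det_continuous.continuousAt
  have hne := lyapK_det_ne_zero Ab hAb
  replace hc := Metric.continuousAt_iff.mp hc
  obtain ⟨δ, hδ0, hδ⟩ := hc |(lyapK Ab).det| (abs_pos.mpr hne)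
  refine ⟨δ, hδ0, fun A' hA' => ?_⟩
  by_contra hmem
  have h0 := lyapK_det_eq_zero A' hmem
  have hdist : dist A' Ab < δ := by
    apply lt_of_le_of_lt _ hA'
    apply (dist_pi_le_iff (frobNorm_nonneg _)).mpr
    intro i
    apply (dist_pi_le_iff (frobNorm_nonneg _)).mpr
    intro j
    rw [Real.dist_eq]
    have := frob_entry_le (A' - Ab) i j
    simpa [Matrix.sub_apply] using this
  have := hδ hdist
  rw [h0, Real.dist_eq, zero_sub, abs_neg] at this
  exact lt_irrefl _ this


lemma expand_lyap {m d : ℕ} (X : Matrix (Fin m) (Fin m) ℝ) (c : Fin d → ℝ)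
    (Ai : Fin d → Matrix (Fin m) (Fin m) ℝ) (P : Matrix (Fin m) (Fin m) ℝ) :
    (X + ∑ j, c j • Ai j) * P + P * (X + ∑ j, c j • Ai j)ᵀ
      = (X * P + P * Xᵀ) + ∑ j, c j • (Ai j * P + P * (Ai j)ᵀ) := by
  rw [Matrix.transpose_add, Matrix.transpose_sum, Matrix.add_mul, Matrix.mul_add,
    Matrix.sum_mul, Matrix.mul_sum]
  simp only [Matrix.transpose_smul, Matrix.smul_mul, Matrix.mul_smul, smul_add,
    Finset.sum_add_distrib]
  abel

end LyapAux

/-- If `aff(𝒮) = A₀ + span{A₁,…,A_d}`, some `Ā₀ ∈ relint(𝒮) ∩ 𝒜_n`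
exists, and the true matrix `A ∈ 𝒮 ∩ 𝒜_n`, then the Lyapunov solution is constant
over `𝒮 ∩ 𝒜_n` iff there is `P` with `A₀ P + P A₀ᵀ = -Q` and `Aᵢ P + P Aᵢᵀ = 0`
for all `i`. -/
theorem stmt_18 (n d : ℕ) (S : Set (Matrix (Fin n) (Fin n) ℝ))
    (Q A A₀ : Matrix (Fin n) (Fin n) ℝ) (Ai : Fin d → Matrix (Fin n) (Fin n) ℝ)
    (haff : (affineSpan ℝ S : Set (Matrix (Fin n) (Fin n) ℝ)) =
      {Atil | ∃ c : Fin d → ℝ, Atil = A₀ + ∑ i, c i • Ai i})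
    (hrelint : ∃ Abar₀, Abar₀ ∈ relintM S ∩ setAn n)
    (hA : A ∈ S ∩ setAn n) :
    (∀ A₁ ∈ S ∩ setAn n, ∀ A₂ ∈ S ∩ setAn n,
        ∀ P₁ P₂ : Matrix (Fin n) (Fin n) ℝ,
          A₁ * P₁ + P₁ * A₁ᵀ = -Q → A₂ * P₂ + P₂ * A₂ᵀ = -Q → P₁ = P₂) ↔
      ∃ P : Matrix (Fin n) (Fin n) ℝ,
        A₀ * P + P * A₀ᵀ = -Q ∧ ∀ i, Ai i * P + P * (Ai i)ᵀ = 0 := by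
  obtain ⟨Ab, ⟨hAbS, ε, hε0, hεball⟩, hAbA⟩ := hrelint
  constructor
  · intro hconst
    have hAbaff : Ab ∈ (affineSpan ℝ S : Set (Matrix (Fin n) (Fin n) ℝ)) :=
      subset_affineSpan ℝ S hAbS
    rw [haff] at hAbaff
    obtain ⟨c, hc⟩ := hAbaff
    obtain ⟨P, hP⟩ := lyap_surj Ab hAbA (-Q)
    obtain ⟨δ, hδ0, hδ⟩ := setAn_nbhd Ab hAbA
    have hPi : ∀ i, Ai i * P + P * (Ai i)ᵀ = 0 := by
      intro i
      by_cases hz : Ai i = 0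
      · simp [hz]
      have hf0 : 0 < frobNorm (Ai i) := frobNorm_pos _ hz
      set t : ℝ := min ε δ / (2 * frobNorm (Ai i)) with ht
      have hmin0 : 0 < min ε δ := lt_min hε0 hδ0
      have ht0 : 0 < t := div_pos hmin0 (by positivity)
      set A' := Ab + t • Ai i with hA'
      have hfr : frobNorm (A' - Ab) < min ε δ := by
        rw [hA', add_sub_cancel_left, frobNorm_smul, abs_of_pos ht0, ht]
        have heq : min ε δ / (2 * frobNorm (Ai i)) * frobNorm (Ai i) = min ε δ / 2 := by
          field_simp
        rw [heq]
        exact half_lt_self hmin0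
      have hsumrep : (∑ j, (if j = i then t else 0) • Ai j) = t • Ai i := by
        simp only [ite_smul, zero_smul]
        rw [Finset.sum_ite_eq' Finset.univ i (fun j => t • Ai j)]
        simp
      have hA'aff : A' ∈ (affineSpan ℝ S : Set (Matrix (Fin n) (Fin n) ℝ)) := by
        rw [haff]
        refine ⟨fun j => c j + if j = i then t else 0, ?_⟩
        simp only [add_smul, Finset.sum_add_distrib, hsumrep]
        rw [hA', hc]
        abel
      have hA'S : A' ∈ S := hεball A' hA'aff (lt_of_lt_of_le hfr (min_le_left _ _))
      have hA'A : A' ∈ setAn n := hδ A' (lt_of_lt_of_le hfr (min_le_right _ _))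
      obtain ⟨P', hP'⟩ := lyap_surj A' hA'A (-Q)
      have hPP' : P = P' := hconst Ab ⟨hAbS, hAbA⟩ A' ⟨hA'S, hA'A⟩ P P' hP hP'
      have h1 : A' * P + P * A'ᵀ = -Q := by rw [hPP']; exact hP'
      have h2 : A' * P + P * A'ᵀ = (Ab * P + P * Abᵀ) + t • (Ai i * P + P * (Ai i)ᵀ) := by
        rw [hA', ← hsumrep, expand_lyap Ab (fun j => if j = i then t else 0) Ai P]
        congr 1
        simp only [ite_smul, zero_smul]
        rw [Finset.sum_ite_eq' Finset.univ i (fun j => t • (Ai j * P + P * (Ai j)ᵀ))]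
        simp
      rw [h2, hP] at h1
      have h3 : t • (Ai i * P + P * (Ai i)ᵀ) = 0 := add_eq_left.mp h1
      rcases smul_eq_zero.mp h3 with h | h
      · exact absurd h (ne_of_gt ht0)
      · exact h
    refine ⟨P, ?_, hPi⟩
    have hsum0 : (∑ j, c j • (Ai j * P + P * (Ai j)ᵀ)) = 0 := by
      rw [Finset.sum_congr rfl (fun j _ => by rw [hPi j, smul_zero])]
      exact Finset.sum_const_zero
    have hexp := expand_lyap A₀ c Ai P
    rw [← hc, hsum0, add_zero] at hexp
    rw [← hexp]
    exact hP
  · rintro ⟨P, hP0, hPi⟩ A₁ ⟨hA₁S, hA₁A⟩ A₂ ⟨hA₂S, hA₂A⟩ P₁ P₂ h1 h2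
    have key : ∀ At ∈ S, At * P + P * Atᵀ = -Q := by
      intro At hAt
      have hAtaff : At ∈ (affineSpan ℝ S : Set (Matrix (Fin n) (Fin n) ℝ)) :=
        subset_affineSpan ℝ S hAt
      rw [haff] at hAtaff
      obtain ⟨ct, hct⟩ := hAtaff
      have hsum0 : (∑ j, ct j • (Ai j * P + P * (Ai j)ᵀ)) = 0 := by
        rw [Finset.sum_congr rfl (fun j _ => by rw [hPi j, smul_zero])]
        exact Finset.sum_const_zero
      rw [hct, expand_lyap A₀ ct Ai P, hsum0, add_zero]
      exact hP0
    have e1 := lyap_unique A₁ hA₁A (-Q) P₁ P h1 (key A₁ hA₁S)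
    have e2 := lyap_unique A₂ hA₂A (-Q) P₂ P h2 (key A₂ hA₂S)
    rw [e1, e2]
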